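/- With the notation above, if b₂ > b₁ > 1 and w_{b₁}(0) ≥ w_{b₂}(0) with w_{b₁}(0) > w_{b₂}(0) (strict monotonicity of b ↦ w_b(0) on (1,∞)), and each w_b is extended linearly by w_b(x) = x - b + μ/r for x ≥ b, then w_{b₂}(x) < w_{b₁}(x) for all x ≥ 0. -/

import Mathlib

/-!
On `[0, b₁]` the difference `u = w₁ - w₂` solves `u'' = p u' + q u` with `q = 2r/σ² > 0`, so it
obeys a strong maximum principle: at a nonpositive interior minimum `x₀` either `u x₀ < 0`, which
forces `u'' x₀ < 0`, or `u x₀ = u' x₀ = 0`, which forces `u ≡ 0` on `[x₀, b₁]` by uniqueness for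
the first-order system satisfied by `(u, u')`. Now `u 0 > 0` by hypothesis and `u b₁ > 0` because
`w₂' ≥ 1` on `[b₁, b₂]` keeps `w₂` below the line of slope one through `(b₂, μ/r)`, which lies
strictly below the line `w₁` for `x ≥ b₁`.
-/

open Set

theorem IsLocalMin.deriv_deriv_nonneg {f : ℝ → ℝ} {x₀ : ℝ} (h : IsLocalMin f x₀)
    (hc : ContinuousAt f x₀) : 0 ≤ deriv (deriv f) x₀ := by
  by_contra! hneg
  -- The second-derivative test makes `x₀` a local maximum as well, so `f` is locally constant.
  have hconst : f =ᶠ[nhds x₀] fun _ => f x₀ := by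
    filter_upwards [h, isLocalMax_of_deriv_deriv_neg hneg h.deriv_eq_zero hc] with x hmin hmax
    exact le_antisymm hmax hmin
  have := hconst.deriv.deriv_eq
  simp only [deriv_const', deriv_const] at this
  exact hneg.ne this

theorem eq_zero_of_deriv_deriv_eq_of_eq_zero_right {u p q : ℝ → ℝ} {a b : ℝ}
    (hu : Differentiable ℝ u) (hu' : Differentiable ℝ (deriv u))
    (hp : ContinuousOn p (Icc a b)) (hq : ContinuousOn q (Icc a b))
    (hode : ∀ t ∈ Icc a b, deriv (deriv u) t = p t * deriv u t + q t * u t)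
    (ha : u a = 0) (ha' : deriv u a = 0) : ∀ x ∈ Icc a b, u x = 0 := by
  obtain ⟨P, hP⟩ := isCompact_Icc.exists_bound_of_continuousOn hp
  obtain ⟨Q, hQ⟩ := isCompact_Icc.exists_bound_of_continuousOn hq
  have hvec := eq_zero_of_abs_deriv_le_mul_abs_self_of_eq_zero_right
    (f := fun t => (u t, deriv u t)) (f' := fun t => (deriv u t, deriv (deriv u) t))
    (K := 1 + P + Q) (a := a) (b := b)
    (hu.continuous.prodMk hu'.continuous).continuousOn
    (fun t _ => ((hu t).hasDerivAt.prodMk (hu' t).hasDerivAt).hasDerivWithinAt)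
    (Prod.ext ha ha') ?_
  · exact fun x hx => congrArg Prod.fst (hvec x hx)
  intro t ht
  replace ht := Ico_subset_Icc_self ht
  set N := ‖(u t, deriv u t)‖
  have hu_le : ‖u t‖ ≤ N := norm_fst_le (u t, deriv u t)
  have hu'_le : ‖deriv u t‖ ≤ N := norm_snd_le (u t, deriv u t)
  have hP₀ : 0 ≤ P := (norm_nonneg _).trans (hP t ht)
  have hQ₀ : 0 ≤ Q := (norm_nonneg _).trans (hQ t ht)
  refine norm_prod_le_iff.2 ⟨by nlinarith [norm_nonneg (u t)], ?_⟩
  calc ‖deriv (deriv u) t‖ = ‖p t * deriv u t + q t * u t‖ := by rw [hode t ht]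
    _ ≤ ‖p t‖ * ‖deriv u t‖ + ‖q t‖ * ‖u t‖ := by
      simpa only [norm_mul] using norm_add_le (p t * deriv u t) (q t * u t)
    _ ≤ P * N + Q * N := by gcongr; exacts [hP t ht, hQ t ht]
    _ ≤ (1 + P + Q) * N := by nlinarith [norm_nonneg (u t)]

theorem pos_of_deriv_deriv_eq_of_pos_endpoints {u p q : ℝ → ℝ} {a b : ℝ}
    (hu : Differentiable ℝ u) (hu' : Differentiable ℝ (deriv u))
    (hp : ContinuousOn p (Icc a b)) (hq : ContinuousOn q (Icc a b))
    (hq_pos : ∀ t ∈ Icc a b, 0 < q t)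
    (hode : ∀ t ∈ Icc a b, deriv (deriv u) t = p t * deriv u t + q t * u t)
    (ha : 0 < u a) (hb : 0 < u b) : ∀ x ∈ Icc a b, 0 < u x := by
  intro x hx
  obtain ⟨x₀, hx₀, hmin⟩ := isCompact_Icc.exists_isMinOn ⟨x, hx⟩ hu.continuous.continuousOn
  by_contra! hux
  have hux₀ : u x₀ ≤ 0 := (hmin hx).trans hux
  have hx₀a : a < x₀ := hx₀.1.lt_of_ne (by rintro rfl; linarith)
  have hx₀b : x₀ < b := hx₀.2.lt_of_ne (by rintro rfl; linarith)
  have hloc : IsLocalMin u x₀ := hmin.isLocalMin (Icc_mem_nhds hx₀a hx₀b)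
  rcases hux₀.lt_or_eq with hneg | hzero
  · have h2 := hloc.deriv_deriv_nonneg hu.continuous.continuousAt
    rw [hode x₀ hx₀, hloc.deriv_eq_zero] at h2
    nlinarith [hq_pos x₀ hx₀]
  · have := eq_zero_of_deriv_deriv_eq_of_eq_zero_right hu hu'
      (hp.mono (Icc_subset_Icc_left hx₀.1)) (hq.mono (Icc_subset_Icc_left hx₀.1))
      (fun t ht => hode t ⟨hx₀.1.trans ht.1, ht.2⟩) hzero hloc.deriv_eq_zero b ⟨hx₀b.le, le_rfl⟩
    linarith

theorem stmt_8_general (μ σ r : ℝ) (hσ : 0 < σ) (hr : 0 < r)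
    (α : ℝ → ℝ) (hα : ContDiff ℝ 1 α)
    (b₁ b₂ : ℝ) (hb₁ : 1 < b₁) (hb₁₂ : b₁ < b₂)
    (w₁ w₂ : ℝ → ℝ) (hw₁ : ContDiff ℝ 2 w₁) (hw₂ : ContDiff ℝ 2 w₂)
    (hode₁ : ∀ x ∈ Icc (0:ℝ) b₁,
      σ ^ 2 / 2 * deriv (deriv w₁) x + (μ - α (max (1 - x) 0)) * deriv w₁ x - r * w₁ x = 0)
    (hode₂ : ∀ x ∈ Icc (0:ℝ) b₂,
      σ ^ 2 / 2 * deriv (deriv w₂) x + (μ - α (max (1 - x) 0)) * deriv w₂ x - r * w₂ x = 0)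
    (hv₁ : w₁ b₁ = μ / r) (hv₂ : w₂ b₂ = μ / r)
    (hlin₁ : ∀ x ≥ b₁, w₁ x = x - b₁ + μ / r) (hlin₂ : ∀ x ≥ b₂, w₂ x = x - b₂ + μ / r)
    (hd2ge : ∀ x ∈ Icc (1:ℝ) b₂, 1 ≤ deriv w₂ x)
    (h0 : w₂ 0 < w₁ 0) :
    ∀ x ≥ (0:ℝ), w₂ x < w₁ x := by
  have hw₂_le : ∀ x ≥ b₁, w₂ x ≤ x - b₂ + μ / r := by
    intro x hx
    rcases le_total x b₂ with hxb | hxb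
    · have hw₂d := hw₂.differentiable two_ne_zero
      have := (convex_Icc 1 b₂).mul_sub_le_image_sub_of_le_deriv hw₂d.continuous.continuousOn
        hw₂d.differentiableOn (fun y hy => hd2ge y (interior_subset hy))
        x ⟨hb₁.le.trans hx, hxb⟩ b₂ ⟨by linarith, le_rfl⟩ hxb
      linarith
    · exact (hlin₂ x hxb).le
  set u : ℝ → ℝ := fun x => w₁ x - w₂ x
  have hdu : deriv u = fun x => deriv w₁ x - deriv w₂ x :=
    funext fun x => deriv_sub (hw₁.differentiable two_ne_zero x) (hw₂.differentiable two_ne_zero x)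
  have hddu (x : ℝ) : deriv (deriv u) x = deriv (deriv w₁) x - deriv (deriv w₂) x := by
    rw [hdu]; exact deriv_sub (hw₁.differentiable_deriv_two x) (hw₂.differentiable_deriv_two x)
  have hode : ∀ t ∈ Icc 0 b₁, deriv (deriv u) t =
      -(2 / σ ^ 2) * (μ - α (max (1 - t) 0)) * deriv u t + 2 * r / σ ^ 2 * u t := by
    intro t ht
    have e₁ := hode₁ t ht
    have e₂ := hode₂ t ⟨ht.1, ht.2.trans hb₁₂.le⟩
    rw [hddu, hdu]
    linear_combination (norm := (field_simp; ring)) (2 / σ ^ 2) * (e₁ - e₂)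
  have hpos := pos_of_deriv_deriv_eq_of_pos_endpoints ((hw₁.sub hw₂).differentiable two_ne_zero)
    (hw₁.sub hw₂).differentiable_deriv_two (by have := hα.continuous; fun_prop) continuousOn_const
    (fun _ _ => by positivity) hode (show 0 < w₁ 0 - w₂ 0 by linarith)
    (show 0 < w₁ b₁ - w₂ b₁ by linarith [hw₂_le b₁ le_rfl])
  intro x hx
  rcases le_or_gt x b₁ with h | h
  · linarith [show 0 < w₁ x - w₂ x from hpos x ⟨hx, h⟩]
  · rw [hlin₁ x h.le]; linarith [hw₂_le x h.le]

theorem stmt_8 (μ σ r : ℝ) (hσ : 0 < σ) (hr : 0 < r) (hμr : r < μ)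
    (α : ℝ → ℝ) (hα : ContDiff ℝ 1 α) (hαconv : ConvexOn ℝ (Ici 0) α)
    (hαmono : StrictMonoOn α (Ici 0)) (hα0 : α 0 = 0)
    (hα' : ∀ x ≥ (0:ℝ), r ≤ deriv α x)
    (b₁ b₂ : ℝ) (hb₁ : 1 < b₁) (hb₁₂ : b₁ < b₂)
    (w₁ w₂ : ℝ → ℝ) (hw₁ : ContDiff ℝ 2 w₁) (hw₂ : ContDiff ℝ 2 w₂)
    (hode₁ : ∀ x ∈ Icc (0:ℝ) b₁,
      σ ^ 2 / 2 * deriv (deriv w₁) x + (μ - α (max (1 - x) 0)) * deriv w₁ x - r * w₁ x = 0)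
    (hode₂ : ∀ x ∈ Icc (0:ℝ) b₂,
      σ ^ 2 / 2 * deriv (deriv w₂) x + (μ - α (max (1 - x) 0)) * deriv w₂ x - r * w₂ x = 0)
    (hv₁ : w₁ b₁ = μ / r) (hv₂ : w₂ b₂ = μ / r)
    (hd₁ : deriv w₁ b₁ = 1) (hd₂ : deriv w₂ b₂ = 1)
    (hdd₁ : deriv (deriv w₁) b₁ = 0) (hdd₂ : deriv (deriv w₂) b₂ = 0)
    (hlin₁ : ∀ x ≥ b₁, w₁ x = x - b₁ + μ / r) (hlin₂ : ∀ x ≥ b₂, w₂ x = x - b₂ + μ / r)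
    (hconc₁ : ConcaveOn ℝ (Icc 1 b₁) w₁) (hconc₂ : ConcaveOn ℝ (Icc 1 b₂) w₂)
    (hd1ge : ∀ x ∈ Icc (1:ℝ) b₁, 1 ≤ deriv w₁ x) (hd2ge : ∀ x ∈ Icc (1:ℝ) b₂, 1 ≤ deriv w₂ x)
    (h0 : w₂ 0 < w₁ 0) :
    ∀ x ≥ (0:ℝ), w₂ x < w₁ x :=
  stmt_8_general μ σ r hσ hr α hα b₁ b₂ hb₁ hb₁₂ w₁ w₂ hw₁ hw₂ hode₁ hode₂ hv₁ hv₂ hlin₁ hlin₂ hd2ge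
    h0
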